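/- arXiv:2104.14875 — 5 statements merged into one kernel-verified Lean document; each statement's English description precedes it below -/
import Mathlib

section
/- Let M, ρ be Hermitian 2×2 complex matrices and define the real 3×3 matrix R by R_{jk} = Re(tr(M σ_j ρ σ_k) + tr(M σ_k ρ σ_j)) for j,k ∈ {1,2,3}, where σ₁ = X, σ₂ = Y, σ₃ = Z. Then R is symmetric, and for every unit vector r = (r₁,r₂,r₃) ∈ ℝ³ the half-rotation expectation satisfies Re tr(M (r·σ) ρ (r·σ)) = (1/2)·Σ_{j,k} r_j R_{jk} r_k, i.e. the energy landscape of a π-Fraxis gate is the quadratic form (1/2)·rᵀR r. -/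
open Matrix Complex

noncomputable def PX : Matrix (Fin 2) (Fin 2) ℂ := !![0, 1; 1, 0]
noncomputable def PY : Matrix (Fin 2) (Fin 2) ℂ := !![0, -Complex.I; Complex.I, 0]
noncomputable def PZ : Matrix (Fin 2) (Fin 2) ℂ := !![1, 0; 0, -1]

/-- The Pauli matrices `σ₁ = X`, `σ₂ = Y`, `σ₃ = Z`. -/
noncomputable def pauli : Fin 3 → Matrix (Fin 2) (Fin 2) ℂ := ![PX, PY, PZ]

/-- `n·σ = n₁X + n₂Y + n₃Z`. -/
noncomputable def nsigma (n : Fin 3 → ℝ) : Matrix (Fin 2) (Fin 2) ℂ :=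
  (n 0 : ℂ) • PX + (n 1 : ℂ) • PY + (n 2 : ℂ) • PZ

/-- `R_n(θ) = cos(θ/2)•1 − i·sin(θ/2)•(n·σ)`. -/
noncomputable def Rgate (n : Fin 3 → ℝ) (θ : ℝ) : Matrix (Fin 2) (Fin 2) ℂ :=
  ((Real.cos (θ / 2) : ℂ)) • (1 : Matrix (Fin 2) (Fin 2) ℂ)
    - (Complex.I * (Real.sin (θ / 2) : ℂ)) • nsigma n

/-- The Fraxis coefficient matrix `R_{jk} = Re(tr(Mσ_jρσ_k) + tr(Mσ_kρσ_j))`. -/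
noncomputable def fraxisMatrix (M ρ : Matrix (Fin 2) (Fin 2) ℂ) : Matrix (Fin 3) (Fin 3) ℝ :=
  Matrix.of fun j k =>
    ((M * pauli j * ρ * pauli k).trace + (M * pauli k * ρ * pauli j).trace).re

/-
Writing `r·σ = ∑ⱼ rⱼ σⱼ`, the expectation `tr(M (r·σ) ρ (r·σ))` is bilinear in `r`:
it equals `∑ⱼₖ rⱼ rₖ tr(M σⱼ ρ σₖ)`. Its real part is therefore the quadratic form of the real
matrix `Re tr(M σⱼ ρ σₖ)`, and a quadratic form only sees the symmetric part `(A + Aᵀ)/2` of its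
matrix, which here is `R/2`.
-/

theorem Finset.sum_sum_mul_mul_eq_half_sum_sum_symm {ι K : Type*} [Fintype ι] [Field K]
    [NeZero (2 : K)] (r : ι → K) (a : ι → ι → K) :
    ∑ j, ∑ k, r j * r k * a j k = (1 / 2) * ∑ j, ∑ k, r j * (a j k + a k j) * r k := by
  have hswap : ∑ j, ∑ k, r j * r k * a k j = ∑ j, ∑ k, r j * r k * a j k := by
    rw [Finset.sum_comm]
    exact Finset.sum_congr rfl fun j _ => Finset.sum_congr rfl fun k _ => by ring
  have hsplit : ∑ j, ∑ k, r j * (a j k + a k j) * r k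
      = ∑ j, ∑ k, r j * r k * a j k + ∑ j, ∑ k, r j * r k * a k j := by
    simp only [← Finset.sum_add_distrib]
    exact Finset.sum_congr rfl fun j _ => Finset.sum_congr rfl fun k _ => by ring
  rw [hsplit, hswap, ← two_mul, ← mul_assoc, one_div, inv_mul_cancel₀ two_ne_zero, one_mul]

theorem Matrix.trace_mul_sum_smul_mul_mul_sum_smul {ι n R : Type*} [Fintype ι] [Fintype n]
    [CommRing R] (A B : Matrix n n R) (σ : ι → Matrix n n R) (c : ι → R) :
    (A * (∑ j, c j • σ j) * B * (∑ k, c k • σ k)).trace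
      = ∑ j, ∑ k, c j * c k * (A * σ j * B * σ k).trace := by
  simp only [Matrix.mul_sum, Matrix.sum_mul, Matrix.mul_smul, Matrix.smul_mul,
    Matrix.trace_sum, Matrix.trace_smul, smul_eq_mul]
  rw [Finset.sum_comm]
  simp only [Finset.mul_sum]
  exact Finset.sum_congr rfl fun j _ => Finset.sum_congr rfl fun k _ => by ring

theorem nsigma_eq_sum (r : Fin 3 → ℝ) : nsigma r = ∑ j, (r j : ℂ) • pauli j := by
  simp [nsigma, pauli, Fin.sum_univ_three]

theorem re_trace_mul_nsigma_mul_nsigma (M ρ : Matrix (Fin 2) (Fin 2) ℂ) (r : Fin 3 → ℝ) :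
    (M * nsigma r * ρ * nsigma r).trace.re
      = ∑ j, ∑ k, r j * r k * (M * pauli j * ρ * pauli k).trace.re := by
  simp only [nsigma_eq_sum, trace_mul_sum_smul_mul_mul_sum_smul, re_sum, ← ofReal_mul,
    re_ofReal_mul]

theorem fraxisMatrix_isSymm (M ρ : Matrix (Fin 2) (Fin 2) ℂ) : (fraxisMatrix M ρ).IsSymm := by
  ext j k
  simp [fraxisMatrix, add_comm]

theorem fraxis_energy_landscape_general (M ρ : Matrix (Fin 2) (Fin 2) ℂ) :
    (fraxisMatrix M ρ).IsSymm ∧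
    ∀ r : Fin 3 → ℝ, r 0 ^ 2 + r 1 ^ 2 + r 2 ^ 2 = 1 →
      ((M * nsigma r * ρ * nsigma r).trace).re =
        (1 / 2) * ∑ j : Fin 3, ∑ k : Fin 3, r j * fraxisMatrix M ρ j k * r k := by
  refine ⟨fraxisMatrix_isSymm M ρ, fun r _ => ?_⟩
  rw [re_trace_mul_nsigma_mul_nsigma, Finset.sum_sum_mul_mul_eq_half_sum_sum_symm]
  simp only [fraxisMatrix, of_apply, add_re]

theorem fraxis_energy_landscape (M ρ : Matrix (Fin 2) (Fin 2) ℂ)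
    (hM : Mᴴ = M) (hρ : ρᴴ = ρ) :
    (fraxisMatrix M ρ).IsSymm ∧
    ∀ r : Fin 3 → ℝ, r 0 ^ 2 + r 1 ^ 2 + r 2 ^ 2 = 1 →
      ((M * nsigma r * ρ * nsigma r).trace).re =
        (1 / 2) * ∑ j : Fin 3, ∑ k : Fin 3, r j * fraxisMatrix M ρ j k * r k :=
  fraxis_energy_landscape_general M ρ
end

section
/- (Lemma 2.) Let n₁, n₂ ∈ ℝ³ be unit vectors such that n = n₁ × n₂ is also a unit vector (equivalently n₁ ⊥ n₂), and set θ = 2·arccos(−n₁·n₂). Then the general rotation gate equals the product of the two π-Fraxis gates: R_n(θ) = R_{n₁}(π)·R_{n₂}(π). -/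
open Matrix Complex

/-! Lagrange's identity `|n₁ × n₂|² = |n₁|²|n₂|² − (n₁·n₂)²` forces `n₁·n₂ = 0` when all three
vectors are unit, so `θ = 2 arccos 0 = π`. The Pauli product rule
`(a·σ)(b·σ) = (a·b)•1 + i (a × b)·σ` then gives
`R_{n₁}(π) R_{n₂}(π) = (−i)² (n₁·σ)(n₂·σ) = −i (n₁ × n₂)·σ = R_n(π)`. -/

lemma dotProduct_self_fin_three (v : Fin 3 → ℝ) : v ⬝ᵥ v = v 0 ^ 2 + v 1 ^ 2 + v 2 ^ 2 := by
  simp only [dotProduct, Fin.sum_univ_three]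
  ring

lemma dotProduct_eq_zero_of_cross_unit {a b : Fin 3 → ℝ} (ha : a ⬝ᵥ a = 1) (hb : b ⬝ᵥ b = 1)
    (hab : (a ⨯₃ b) ⬝ᵥ (a ⨯₃ b) = 1) : a ⬝ᵥ b = 0 := by
  rw [cross_dot_cross, ha, hb, dotProduct_comm b a] at hab
  exact pow_eq_zero_iff two_ne_zero |>.mp (by linarith)

lemma nsigma_mul_nsigma (a b : Fin 3 → ℝ) :
    nsigma a * nsigma b = ((a ⬝ᵥ b : ℝ) : ℂ) • 1 + I • nsigma (a ⨯₃ b) := by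
  ext i j
  fin_cases i <;> fin_cases j <;>
    simp [nsigma, PX, PY, PZ, cross_apply, dotProduct, Fin.sum_univ_three, Matrix.mul_apply, Fin.sum_univ_two] <;>
    ring_nf <;> simp only [I_sq] <;> ring

lemma Rgate_pi (n : Fin 3 → ℝ) : Rgate n Real.pi = -I • nsigma n := by
  simp [Rgate]

theorem rotation_as_two_pi_fraxis (n₁ n₂ : Fin 3 → ℝ)
    (h₁ : n₁ 0 ^ 2 + n₁ 1 ^ 2 + n₁ 2 ^ 2 = 1)
    (h₂ : n₂ 0 ^ 2 + n₂ 1 ^ 2 + n₂ 2 ^ 2 = 1)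
    (n : Fin 3 → ℝ) (hn : n = crossProduct n₁ n₂)
    (hunit : n 0 ^ 2 + n 1 ^ 2 + n 2 ^ 2 = 1)
    (θ : ℝ) (hθ : θ = 2 * Real.arccos (-(n₁ ⬝ᵥ n₂))) :
    Rgate n θ = Rgate n₁ Real.pi * Rgate n₂ Real.pi := by
  rw [← dotProduct_self_fin_three] at h₁ h₂ hunit
  subst hn
  have horth : n₁ ⬝ᵥ n₂ = 0 := dotProduct_eq_zero_of_cross_unit h₁ h₂ hunit
  have hθπ : θ = Real.pi := by rw [hθ, horth, neg_zero, Real.arccos_zero]; ring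
  rw [hθπ, Rgate_pi, Rgate_pi, Rgate_pi, smul_mul_smul_comm, nsigma_mul_nsigma, horth]
  simp [smul_smul]
end

section
/- (Sinusoidal dependence on the angle, enabling Rotosolve/NFT.) Let M, ρ be Hermitian 2×2 complex matrices and n ∈ ℝ³ a unit vector. Then there exist real constants a, b, c such that for every θ ∈ ℝ, Re tr(M R_n(θ) ρ R_n(θ)†) = a·cos θ + b·sin θ + c. Consequently the expectation value as a function of the rotation angle is fully determined by its values at three distinct angles. -/
open Matrix Complex

/-!
Conjugating by `R_n(θ) = cos(θ/2) - i sin(θ/2) n·σ` makes the trace a quadratic form in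
`cos(θ/2)` and `sin(θ/2)`, which the double-angle formulas turn into `a cos θ + b sin θ + c`.
Such a sinusoid vanishing at three angles distinct mod `2π` is zero: by sum-to-product, two zeros
`x, y` force `(a, b)` to be orthogonal to `(cos m, sin m)` for the midpoint `m = (x + y) / 2`, and
the two midpoints of `θ₁, θ₂` and `θ₂, θ₃` do not differ by a multiple of `π`.
-/

def IsSinusoid (f : ℝ → ℝ) : Prop :=
  ∃ a b c : ℝ, ∀ θ, f θ = a * Real.cos θ + b * Real.sin θ + c

theorem sin_half_sub_ne_zero {x y : ℝ} (h : ∀ k : ℤ, x - y ≠ 2 * Real.pi * k) :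
    Real.sin ((x - y) / 2) ≠ 0 := by
  rw [Ne, Real.sin_eq_zero_iff]
  rintro ⟨k, hk⟩
  exact h k (by linarith)

theorem mul_cos_midpoint_eq_of_eq {a b x y : ℝ} (hxy : Real.sin ((x - y) / 2) ≠ 0)
    (h : a * Real.cos x + b * Real.sin x = a * Real.cos y + b * Real.sin y) :
    b * Real.cos ((x + y) / 2) = a * Real.sin ((x + y) / 2) := by
  have hprod : 2 * Real.sin ((x - y) / 2)
      * (b * Real.cos ((x + y) / 2) - a * Real.sin ((x + y) / 2)) = 0 := by
    linear_combination h - a * Real.cos_sub_cos x y - b * Real.sin_sub_sin x y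
  simpa [hxy, sub_eq_zero] using hprod

theorem eq_zero_of_mul_cos_eq_mul_sin {a b u v : ℝ} (huv : Real.sin (u - v) ≠ 0)
    (hu : b * Real.cos u = a * Real.sin u) (hv : b * Real.cos v = a * Real.sin v) :
    a = 0 ∧ b = 0 := by
  have ha : a * Real.sin (u - v) = 0 := by
    linear_combination a * Real.sin_sub u v - Real.cos v * hu + Real.cos u * hv
  have hb : b * Real.sin (u - v) = 0 := by
    linear_combination b * Real.sin_sub u v - Real.sin v * hu + Real.sin u * hv
  exact ⟨(mul_eq_zero.mp ha).resolve_right huv, (mul_eq_zero.mp hb).resolve_right huv⟩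

namespace IsSinusoid

theorem sub {f g : ℝ → ℝ} (hf : IsSinusoid f) (hg : IsSinusoid g) :
    IsSinusoid fun θ => f θ - g θ := by
  obtain ⟨a, b, c, hf⟩ := hf
  obtain ⟨a', b', c', hg⟩ := hg
  exact ⟨a - a', b - b', c - c', fun θ => by simp only [hf, hg]; ring⟩

theorem of_half_angle_quadratic (p q r : ℝ) :
    IsSinusoid fun θ => p * Real.cos (θ / 2) ^ 2
      + q * (Real.cos (θ / 2) * Real.sin (θ / 2)) + r * Real.sin (θ / 2) ^ 2 := by
  refine ⟨(p - r) / 2, q / 2, (p + r) / 2, fun θ => ?_⟩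
  have hcos : Real.cos θ = 2 * Real.cos (θ / 2) ^ 2 - 1 := by
    rw [← Real.cos_two_mul]; ring_nf
  have hsin : Real.sin θ = 2 * Real.sin (θ / 2) * Real.cos (θ / 2) := by
    rw [← Real.sin_two_mul]; ring_nf
  rw [hcos, hsin]
  linear_combination r * Real.sin_sq_add_cos_sq (θ / 2)

theorem eq_zero_of_three_zeros {f : ℝ → ℝ} (hf : IsSinusoid f) {θ₁ θ₂ θ₃ : ℝ}
    (h12 : ∀ k : ℤ, θ₁ - θ₂ ≠ 2 * Real.pi * k) (h23 : ∀ k : ℤ, θ₂ - θ₃ ≠ 2 * Real.pi * k)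
    (h13 : ∀ k : ℤ, θ₁ - θ₃ ≠ 2 * Real.pi * k)
    (h₁ : f θ₁ = 0) (h₂ : f θ₂ = 0) (h₃ : f θ₃ = 0) (θ : ℝ) : f θ = 0 := by
  obtain ⟨a, b, c, hf⟩ := hf
  rw [hf] at h₁ h₂ h₃ ⊢
  have hu :=
    mul_cos_midpoint_eq_of_eq (a := a) (b := b) (sin_half_sub_ne_zero h12) (by linarith)
  have hv :=
    mul_cos_midpoint_eq_of_eq (a := a) (b := b) (sin_half_sub_ne_zero h23) (by linarith)
  have huv : (θ₁ + θ₂) / 2 - (θ₂ + θ₃) / 2 = (θ₁ - θ₃) / 2 := by ring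
  obtain ⟨rfl, rfl⟩ :=
    eq_zero_of_mul_cos_eq_mul_sin (huv ▸ sin_half_sub_ne_zero h13) hu hv
  linarith

theorem eq_of_eq_at_three {f g : ℝ → ℝ} (hf : IsSinusoid f) (hg : IsSinusoid g)
    {θ₁ θ₂ θ₃ : ℝ} (h12 : ∀ k : ℤ, θ₁ - θ₂ ≠ 2 * Real.pi * k)
    (h23 : ∀ k : ℤ, θ₂ - θ₃ ≠ 2 * Real.pi * k) (h13 : ∀ k : ℤ, θ₁ - θ₃ ≠ 2 * Real.pi * k)
    (h₁ : f θ₁ = g θ₁) (h₂ : f θ₂ = g θ₂) (h₃ : f θ₃ = g θ₃) (θ : ℝ) : f θ = g θ :=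
  sub_eq_zero.mp <| (hf.sub hg).eq_zero_of_three_zeros h12 h23 h13
    (sub_eq_zero.mpr h₁) (sub_eq_zero.mpr h₂) (sub_eq_zero.mpr h₃) θ

end IsSinusoid

theorem Matrix.trace_mul_sandwich {ι R : Type*} [Fintype ι] [DecidableEq ι] [CommRing R]
    (M ρ N : Matrix ι ι R) (c s : R) :
    (M * (c • 1 - s • N) * ρ * (c • 1 + s • N)).trace
      = c ^ 2 * (M * ρ).trace + c * s * ((M * ρ * N).trace - (M * N * ρ).trace)
        - s ^ 2 * (M * N * ρ * N).trace := by
  simp only [Matrix.mul_sub, Matrix.sub_mul, Matrix.mul_add, Matrix.mul_smul,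
    Matrix.smul_mul, Matrix.mul_one, Matrix.trace_add, Matrix.trace_sub, Matrix.trace_smul,
    smul_eq_mul]
  ring

theorem nsigma_conjTranspose (n : Fin 3 → ℝ) : (nsigma n)ᴴ = nsigma n := by
  ext i j
  fin_cases i <;> fin_cases j <;> simp [nsigma, PX, PY, PZ, Matrix.conjTranspose_apply]

theorem Rgate_conjTranspose (n : Fin 3 → ℝ) (θ : ℝ) :
    (Rgate n θ)ᴴ = (Real.cos (θ / 2) : ℂ) • 1 + (Complex.I * Real.sin (θ / 2)) • nsigma n := by
  rw [Rgate, conjTranspose_sub, conjTranspose_smul, conjTranspose_smul, conjTranspose_one,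
    nsigma_conjTranspose]
  simp only [Complex.star_def, map_mul, Complex.conj_I, Complex.conj_ofReal, neg_mul, neg_smul,
    sub_neg_eq_add]

theorem isSinusoid_re_trace_Rgate (M ρ : Matrix (Fin 2) (Fin 2) ℂ) (n : Fin 3 → ℝ) :
    IsSinusoid fun θ => ((M * Rgate n θ * ρ * (Rgate n θ)ᴴ).trace).re := by
  set N := nsigma n
  convert IsSinusoid.of_half_angle_quadratic (M * ρ).trace.re
    (Complex.I * ((M * ρ * N).trace - (M * N * ρ).trace)).re (M * N * ρ * N).trace.re
    using 2 with θ
  rw [Rgate_conjTranspose, Rgate, Matrix.trace_mul_sandwich]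
  simp only [pow_two, Complex.add_re, Complex.sub_re, Complex.mul_re, Complex.mul_im,
    Complex.sub_im, Complex.ofReal_re, Complex.ofReal_im, Complex.I_re, Complex.I_im]
  ring

theorem expectation_sinusoidal_in_angle_general (M ρ : Matrix (Fin 2) (Fin 2) ℂ)
    (n : Fin 3 → ℝ)
    (E : ℝ → ℝ)
    (hE : E = fun θ => ((M * Rgate n θ * ρ * (Rgate n θ)ᴴ).trace).re) :
    (∃ a b c : ℝ, ∀ θ : ℝ, E θ = a * Real.cos θ + b * Real.sin θ + c) ∧
    -- consequently `E` is fully determined by its values at three distinct angles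
    (∀ θ₁ θ₂ θ₃ : ℝ,
      (∀ k : ℤ, θ₁ - θ₂ ≠ 2 * Real.pi * k) →
      (∀ k : ℤ, θ₂ - θ₃ ≠ 2 * Real.pi * k) →
      (∀ k : ℤ, θ₁ - θ₃ ≠ 2 * Real.pi * k) →
      ∀ g : ℝ → ℝ,
        (∃ a b c : ℝ, ∀ θ : ℝ, g θ = a * Real.cos θ + b * Real.sin θ + c) →
        g θ₁ = E θ₁ → g θ₂ = E θ₂ → g θ₃ = E θ₃ → ∀ θ : ℝ, g θ = E θ) := by
  have hsin : IsSinusoid E := hE ▸ isSinusoid_re_trace_Rgate M ρ n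
  exact ⟨hsin, fun _ _ _ h12 h23 h13 _ hg => IsSinusoid.eq_of_eq_at_three hg hsin h12 h23 h13⟩

theorem expectation_sinusoidal_in_angle (M ρ : Matrix (Fin 2) (Fin 2) ℂ)
    (hM : Mᴴ = M) (hρ : ρᴴ = ρ)
    (n : Fin 3 → ℝ) (hn : n 0 ^ 2 + n 1 ^ 2 + n 2 ^ 2 = 1)
    (E : ℝ → ℝ)
    (hE : E = fun θ => ((M * Rgate n θ * ρ * (Rgate n θ)ᴴ).trace).re) :
    (∃ a b c : ℝ, ∀ θ : ℝ, E θ = a * Real.cos θ + b * Real.sin θ + c) ∧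
    -- consequently `E` is fully determined by its values at three distinct angles
    (∀ θ₁ θ₂ θ₃ : ℝ,
      (∀ k : ℤ, θ₁ - θ₂ ≠ 2 * Real.pi * k) →
      (∀ k : ℤ, θ₂ - θ₃ ≠ 2 * Real.pi * k) →
      (∀ k : ℤ, θ₁ - θ₃ ≠ 2 * Real.pi * k) →
      ∀ g : ℝ → ℝ,
        (∃ a b c : ℝ, ∀ θ : ℝ, g θ = a * Real.cos θ + b * Real.sin θ + c) →
        g θ₁ = E θ₁ → g θ₂ = E θ₂ → g θ₃ = E θ₃ → ∀ θ : ℝ, g θ = E θ) :=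
  expectation_sinusoidal_in_angle_general M ρ n E hE
end

section
/- (KL divergence of the R_y (Rotosolve) ansatz from Haar for one qubit.) With P(x) = 1/(π·√(x(1−x))) on (0,1) and the one-qubit Haar fidelity density identically equal to 1 on (0,1), the Kullback–Leibler divergence equals log(4/π): ∫_{x ∈ (0,1)} (1/(π·√(x(1−x))))·log(1/(π·√(x(1−x)))) dx = log(4/π). -/
/-!
Substituting `x = (1 - cos t) / 2` gives `√(x (1 - x)) = sin t / 2 = dx/dt`, so the arcsine density
`1 / (π √(x (1 - x)))` on `(0, 1)` is the image of the uniform density `1 / π` on `(0, π)`.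
The integral becomes `π⁻¹ ∫₀^π (log (2 / π) - log (sin t)) dt`, and `∫₀^π log (sin t) dt = -π log 2`.
-/

open MeasureTheory Real Set

lemma image_one_sub_cos_div_two_Ioo :
    (fun t => (1 - cos t) / 2) '' Ioo 0 π = Ioo 0 1 := by
  ext x
  constructor
  · rintro ⟨t, ht, rfl⟩
    obtain ⟨h₁, h₂⟩ := mapsTo_cos_Ioo ht
    constructor <;> linarith
  · rintro ⟨h₀, h₁⟩
    refine ⟨arccos (1 - 2 * x), ⟨arccos_pos.2 (by linarith), arccos_lt_pi.2 (by linarith)⟩, ?_⟩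
    simp only [cos_arccos (by linarith : (-1 : ℝ) ≤ 1 - 2 * x) (by linarith)]
    ring

lemma sqrt_mul_one_sub_one_sub_cos_div_two {t : ℝ} (ht : 0 ≤ sin t) :
    √((1 - cos t) / 2 * (1 - (1 - cos t) / 2)) = sin t / 2 := by
  rw [Real.sqrt_eq_iff_mul_self_eq (by nlinarith [sin_sq_add_cos_sq t]) (by positivity)]
  nlinarith [sin_sq_add_cos_sq t]

theorem integral_Ioo_div_sqrt_mul_one_sub {E : Type*} [NormedAddCommGroup E] [NormedSpace ℝ E]
    (f : ℝ → E) :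
    ∫ x in Ioo 0 1, (√(x * (1 - x)))⁻¹ • f x = ∫ t in Ioo 0 π, f ((1 - cos t) / 2) := by
  rw [← image_one_sub_cos_div_two_Ioo,
    integral_image_eq_integral_abs_deriv_smul measurableSet_Ioo
      (f' := fun t => sin t / 2)
      (fun t _ => by simpa using ((hasDerivAt_cos t).const_sub 1).div_const 2 |>.hasDerivWithinAt)
      (fun a ha b hb hab => injOn_cos (Ioo_subset_Icc_self ha) (Ioo_subset_Icc_self hb)
        (by simpa using hab))]
  refine setIntegral_congr_fun measurableSet_Ioo fun t ht => ?_
  have hsin : 0 < sin t := sin_pos_of_pos_of_lt_pi ht.1 ht.2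
  simp only [sqrt_mul_one_sub_one_sub_cos_div_two hsin.le, abs_of_pos (half_pos hsin), smul_smul]
  rw [mul_inv_cancel₀ (by positivity), one_smul]

lemma integrableOn_Ioo_log_sin : IntegrableOn (fun t => log (sin t)) (Ioo 0 π) := by
  rw [← integrableOn_Ioc_iff_integrableOn_Ioo,
    ← intervalIntegrable_iff_integrableOn_Ioc_of_le pi_pos.le]
  exact intervalIntegrable_log_sin

lemma integral_Ioo_log_sin : ∫ t in Ioo 0 π, log (sin t) = -log 2 * π := by
  rw [← integral_Ioc_eq_integral_Ioo, ← intervalIntegral.integral_of_le pi_pos.le,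
    integral_log_sin_zero_pi]

theorem kl_divergence_ry_ansatz_eq_log_four_div_pi :
    ∫ x in Set.Ioo (0 : ℝ) 1,
        (1 / (Real.pi * Real.sqrt (x * (1 - x))))
          * Real.log (1 / (Real.pi * Real.sqrt (x * (1 - x))))
      = Real.log (4 / Real.pi) := by
  calc ∫ x in Ioo 0 1, 1 / (π * √(x * (1 - x))) * log (1 / (π * √(x * (1 - x))))
      = ∫ x in Ioo 0 1, (√(x * (1 - x)))⁻¹ • (π⁻¹ * log (1 / (π * √(x * (1 - x))))) := by
        simp only [smul_eq_mul, one_div, mul_inv]; ring_nf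
    _ = ∫ t in Ioo 0 π, π⁻¹ * (log (2 / π) - log (sin t)) := by
        rw [integral_Ioo_div_sqrt_mul_one_sub]
        refine setIntegral_congr_fun measurableSet_Ioo fun t ht => ?_
        have hsin : 0 < sin t := sin_pos_of_pos_of_lt_pi ht.1 ht.2
        rw [sqrt_mul_one_sub_one_sub_cos_div_two hsin.le, ← log_div (by positivity) hsin.ne']
        congr 2
        field_simp
    _ = log (4 / π) := by
        rw [integral_const_mul,
          integral_sub (integrableOn_const (C := log (2 / π)) measure_Ioo_lt_top.ne)
            integrableOn_Ioo_log_sin,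
          integral_Ioo_log_sin, setIntegral_const, Real.volume_real_Ioo_of_le pi_pos.le,
          show (4 : ℝ) / π = 2 / π * 2 by ring, log_mul (by positivity) two_ne_zero]
        field_simp
        ring
end

section
/- (Pushforward of the uniform angle to the fidelity.) Let μ be the uniform probability measure on the interval [−π, π] (i.e. (2π)⁻¹ times Lebesgue measure restricted to [−π, π]). Then the pushforward of μ under the map θ ↦ cos²(θ/2) equals the measure on ℝ with density x ↦ 1/(π·√(x(1−x))) on (0,1) (and density 0 elsewhere) with respect to Lebesgue measure. That is, the fidelity F = |⟨0|R_y(θ)|0⟩|² = cos²(θ/2) of a uniformly random R_y rotation follows the arcsine distribution. -/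
/-!
On `(0, π)` the map `θ ↦ cos² (θ / 2)` has the inverse `x ↦ 2 arccos √x`, whose derivative has
absolute value `1 / √(x (1 - x))`. The change of variables formula for this inverse turns Lebesgue
measure on `(0, π)` into the measure with that density on `(0, 1)`. Since the map is even, the
interval `[-π, π]` contributes twice as much, and `2 / (2π) = 1 / π`.
-/

open MeasureTheory Real Set
open scoped ENNReal

section ChangeOfVariables

variable {E : Type*} [NormedAddCommGroup E] [NormedSpace ℝ E] [FiniteDimensional ℝ E]
  [MeasurableSpace E] [BorelSpace E] (μ : Measure E) [μ.IsAddHaarMeasure]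

theorem map_restrict_image_eq_withDensity_abs_det_fderiv {s : Set E} {f g : E → E}
    {g' : E → E →L[ℝ] E} (hs : MeasurableSet s) (hg' : ∀ x ∈ s, HasFDerivWithinAt g (g' x) s x)
    (hf : Measurable f) (hfg : LeftInvOn f g s) :
    Measure.map f (μ.restrict (g '' s)) =
      (μ.restrict s).withDensity fun x => ENNReal.ofReal |(g' x).det| := by
  set ν := (μ.restrict s).withDensity fun x => ENNReal.ofReal |(g' x).det|
  have hν : ν ≪ μ.restrict s := withDensity_absolutelyContinuous _ _
  have hg : AEMeasurable g ν :=
    (ContinuousOn.aemeasurable₀ (fun x hx ↦ (hg' x hx).continuousWithinAt)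
      hs.nullMeasurableSet).mono_ac hν
  have hfg_ae : f ∘ g =ᵐ[ν] id := hν.ae_le (by filter_upwards [ae_restrict_mem hs] using hfg)
  rw [← map_withDensity_abs_det_fderiv_eq_addHaar μ hs.nullMeasurableSet hg' hfg.injOn,
    AEMeasurable.map_map_of_aemeasurable hf.aemeasurable hg, Measure.map_congr hfg_ae,
    Measure.map_id]

end ChangeOfVariables

theorem map_volume_restrict_image_eq_withDensity_abs_deriv {s : Set ℝ} {f g g' : ℝ → ℝ}
    (hs : MeasurableSet s) (hg' : ∀ x ∈ s, HasDerivWithinAt g (g' x) s x)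
    (hf : Measurable f) (hfg : LeftInvOn f g s) :
    Measure.map f (volume.restrict (g '' s)) =
      (volume.restrict s).withDensity fun x => ENNReal.ofReal |g' x| := by
  simpa only [ContinuousLinearMap.det_toSpanSingleton] using
    map_restrict_image_eq_withDensity_abs_det_fderiv volume hs
      (fun x hx ↦ (hg' x hx).hasFDerivWithinAt) hf hfg

theorem map_restrict_Icc_neg_eq_two_smul_map_restrict_Ioo {μ : Measure ℝ} [μ.IsNegInvariant]
    [NullSingletonClass μ] {f : ℝ → ℝ} (hf : Measurable f) (hf_even : ∀ x, f (-x) = f x) {a : ℝ}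
    (ha : 0 ≤ a) :
    Measure.map f (μ.restrict (Icc (-a) a)) =
      (2 : ℝ≥0∞) • Measure.map f (μ.restrict (Ioo 0 a)) := by
  have hf_neg : f ∘ Neg.neg = f := funext hf_even
  have h_neg : Measure.map Neg.neg (μ.restrict (Ioo 0 a)) = μ.restrict (Ioc (-a) 0) := by
    rw [← Measure.map_neg_eq_self μ, Measure.restrict_map measurable_neg measurableSet_Ioc,
      Measure.map_neg_eq_self μ, Measure.restrict_congr_set Ioo_ae_eq_Ico]
    change _ = Measure.map _ (μ.restrict (-Ioc (-a) 0))
    rw [neg_Ioc, neg_zero, neg_neg]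
  rw [Measure.restrict_congr_set Ioc_ae_eq_Icc.symm, ← Ioc_union_Ioc_eq_Ioc (by linarith) ha,
    Measure.restrict_union (Ioc_disjoint_Ioc_of_le le_rfl) measurableSet_Ioc,
    Measure.map_add _ _ hf, ← h_neg, Measure.map_map hf measurable_neg, hf_neg, two_smul,
    Measure.restrict_congr_set (Ioo_ae_eq_Ioc (a := 0) (b := a))]

theorem hasDerivAt_two_mul_arccos_sqrt {x : ℝ} (hx₀ : 0 < x) (hx₁ : x < 1) :
    HasDerivAt (fun y => 2 * arccos √y) (-(√(x * (1 - x)))⁻¹) x := by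
  have hsqrt₀ : 0 < √x := sqrt_pos.mpr hx₀
  have hsqrt₁ : √x < 1 := by rw [sqrt_lt' one_pos]; linarith
  refine (((hasDerivAt_arccos (by linarith) hsqrt₁.ne).comp x
    (hasDerivAt_sqrt hx₀.ne')).const_mul 2).congr_deriv ?_
  rw [sq_sqrt hx₀.le, sqrt_mul hx₀.le]
  have : 0 < √(1 - x) := sqrt_pos.mpr (by linarith)
  field_simp

theorem cos_sq_half_two_mul_arccos_sqrt {x : ℝ} (hx₀ : 0 ≤ x) (hx₁ : x ≤ 1) :
    cos (2 * arccos √x / 2) ^ 2 = x := by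
  rw [mul_div_cancel_left₀ _ two_ne_zero, cos_arccos (by linarith [sqrt_nonneg x])
    (sqrt_le_one.mpr hx₁), sq_sqrt hx₀]

theorem image_two_mul_arccos_sqrt_Ioo : (fun x => 2 * arccos √x) '' Ioo 0 1 = Ioo 0 π := by
  refine Subset.antisymm ?_ fun θ ⟨hθ₀, hθ₁⟩ => ?_
  · rintro _ ⟨x, ⟨hx₀, hx₁⟩, rfl⟩
    have h₀ : 0 < arccos √x := arccos_pos.mpr (by rw [sqrt_lt' one_pos]; linarith)
    have h₁ : arccos √x < π / 2 := arccos_lt_pi_div_two.mpr (sqrt_pos.mpr hx₀)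
    constructor <;> linarith
  have hcos₀ : 0 < cos (θ / 2) := cos_pos_of_mem_Ioo ⟨by linarith [pi_pos], by linarith⟩
  have hcos₁ : cos (θ / 2) < 1 := by
    simpa using cos_lt_cos_of_nonneg_of_le_pi le_rfl (by linarith) (half_pos hθ₀)
  refine ⟨cos (θ / 2) ^ 2, ⟨by positivity, pow_lt_one₀ hcos₀.le hcos₁ two_ne_zero⟩, ?_⟩
  show 2 * arccos √(cos (θ / 2) ^ 2) = θ
  rw [sqrt_sq hcos₀.le, arccos_cos (by linarith) (by linarith)]
  ring

theorem map_cos_sq_half_volume_restrict_Ioo_zero_pi :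
    Measure.map (fun θ => cos (θ / 2) ^ 2) (volume.restrict (Ioo 0 π)) =
      (volume.restrict (Ioo 0 1)).withDensity fun x => ENNReal.ofReal (√(x * (1 - x)))⁻¹ := by
  rw [← image_two_mul_arccos_sqrt_Ioo,
    map_volume_restrict_image_eq_withDensity_abs_deriv measurableSet_Ioo
      (fun x hx => (hasDerivAt_two_mul_arccos_sqrt hx.1 hx.2).hasDerivWithinAt) (by fun_prop)
      fun x hx => cos_sq_half_two_mul_arccos_sqrt hx.1.le hx.2.le]
  simp_rw [abs_neg, abs_inv, abs_of_nonneg (sqrt_nonneg _)]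

theorem fidelity_pushforward_arcsine :
    Measure.map (fun θ : ℝ => Real.cos (θ / 2) ^ 2)
        ((ENNReal.ofReal (2 * Real.pi))⁻¹ •
          (volume.restrict (Set.Icc (-Real.pi) Real.pi))) =
      volume.withDensity
        (Set.indicator (Set.Ioo (0 : ℝ) 1)
          (fun x => ENNReal.ofReal (1 / (Real.pi * Real.sqrt (x * (1 - x)))))) := by
  have hconst : (ENNReal.ofReal (2 * π))⁻¹ * 2 = ENNReal.ofReal π⁻¹ := by
    rw [← ENNReal.ofReal_inv_of_pos (by positivity), ← ENNReal.ofReal_ofNat 2,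
      ← ENNReal.ofReal_mul (by positivity)]
    congr 1
    field_simp
  rw [Measure.map_smul, map_restrict_Icc_neg_eq_two_smul_map_restrict_Ioo (by fun_prop)
      (fun θ => by rw [neg_div, cos_neg]) pi_pos.le,
    map_cos_sq_half_volume_restrict_Ioo_zero_pi, withDensity_indicator measurableSet_Ioo,
    smul_smul, hconst, ← withDensity_smul' _ _ ENNReal.ofReal_ne_top]
  congr with x
  rw [Pi.smul_apply, smul_eq_mul, ← ENNReal.ofReal_mul (by positivity), one_div, mul_inv]
end
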